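/- Let 0 < δ′ < β and N > 0 and c > 0. Then there exists a constant C such that for all t > 0 and all ρ′ > 0: ∫_0^∞ e^{−c w²} w^{β−δ′} (1 + t/(w ρ′))^{−N} dw/w ≤ C (1 + t/ρ′)^{−N}. -/

import Mathlib

/-!
Since `1 + x ≤ max 1 w * (1 + x / w)` for `x ≥ 0` and `w > 0`, the factor `(1 + t / (w ρ'))^(-N)`
is at most `(1 + w ^ N) (1 + t / ρ')^(-N)`. What remains is the integral of
`w ^ (β - δ' - 1) e^(-c w²) (1 + w ^ N)` over `(0, ∞)`, which is finite because `β - δ' > 0`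
tames the origin and the Gaussian tames infinity.
-/

open MeasureTheory Set

lemma one_add_le_max_one_mul_one_add_div {x w : ℝ} (hx : 0 ≤ x) (hw : 0 < w) :
    1 + x ≤ max 1 w * (1 + x / w) := by
  rcases le_total w 1 with hw1 | hw1
  · rw [max_eq_left hw1, one_mul]
    gcongr
    exact le_div_self hx hw hw1
  · rw [max_eq_right hw1, mul_add, mul_div_cancel₀ x hw.ne']
    linarith

lemma max_one_rpow_le_one_add_rpow {w N : ℝ} (hw : 0 ≤ w) (hN : 0 ≤ N) :
    max 1 w ^ N ≤ 1 + w ^ N := by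
  rw [Real.rpow_max zero_le_one hw hN, Real.one_rpow]
  exact max_le_add_of_nonneg zero_le_one (Real.rpow_nonneg hw N)

lemma one_add_div_rpow_neg_le {x w N : ℝ} (hx : 0 ≤ x) (hw : 0 < w) (hN : 0 ≤ N) :
    (1 + x / w) ^ (-N) ≤ (1 + w ^ N) * (1 + x) ^ (-N) := by
  have ha : 0 < 1 + x / w := by positivity
  have hb : 0 < 1 + x := by positivity
  rw [Real.rpow_neg ha.le, Real.rpow_neg hb.le, ← div_eq_mul_inv,
    le_div_iff₀ (by positivity), inv_mul_eq_div, div_le_iff₀ (by positivity)]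
  calc (1 + x) ^ N ≤ (max 1 w * (1 + x / w)) ^ N := by
        gcongr
        exact one_add_le_max_one_mul_one_add_div hx hw
    _ = max 1 w ^ N * (1 + x / w) ^ N := Real.mul_rpow (by positivity) ha.le
    _ ≤ (1 + w ^ N) * (1 + x / w) ^ N := by
        gcongr
        exact max_one_rpow_le_one_add_rpow hw.le hN

lemma integrableOn_rpow_mul_exp_neg_mul_sq_mul_one_add_rpow {c s N : ℝ} (hc : 0 < c)
    (hs : -1 < s) (hN : 0 ≤ N) :
    IntegrableOn (fun w : ℝ => w ^ s * Real.exp (-c * w ^ 2) * (1 + w ^ N)) (Ioi 0) := by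
  refine ((integrableOn_rpow_mul_exp_neg_mul_sq hc hs).add
    (integrableOn_rpow_mul_exp_neg_mul_sq hc (s := s + N) (by linarith))).congr_fun
    (fun w (hw : 0 < w) => ?_) measurableSet_Ioi
  simp only [Pi.add_apply, Real.rpow_add hw]
  ring

lemma exp_mul_rpow_mul_one_add_div_rpow_neg_div_le {c a x N w : ℝ} (hx : 0 ≤ x) (hN : 0 ≤ N)
    (hw : 0 < w) :
    Real.exp (-c * w ^ 2) * w ^ a * (1 + x / w) ^ (-N) / w ≤
      w ^ (a - 1) * Real.exp (-c * w ^ 2) * (1 + w ^ N) * (1 + x) ^ (-N) := by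
  rw [Real.rpow_sub_one hw.ne', mul_assoc _ (1 + w ^ N)]
  calc _ = w ^ a / w * Real.exp (-c * w ^ 2) * (1 + x / w) ^ (-N) := by ring
    _ ≤ _ := by gcongr; exact one_add_div_rpow_neg_le hx hw hN

theorem stmt_8 (δ' β : ℝ) (hβ : δ' < β) (N : ℝ) (hN : 0 < N)
    (c : ℝ) (hc : 0 < c) :
    ∃ C > (0 : ℝ), ∀ t ρ' : ℝ, 0 < t → 0 < ρ' →
      (∫ w in Ioi (0 : ℝ),
          Real.exp (-c * w ^ 2) * w ^ (β - δ') * (1 + t / (w * ρ')) ^ (-N) / w)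
        ≤ C * (1 + t / ρ') ^ (-N) := by
  set g : ℝ → ℝ := fun w => w ^ (β - δ' - 1) * Real.exp (-c * w ^ 2) * (1 + w ^ N)
  have hg : IntegrableOn g (Ioi 0) :=
    integrableOn_rpow_mul_exp_neg_mul_sq_mul_one_add_rpow hc (by linarith) hN.le
  have hg_nonneg : 0 ≤ ∫ w in Ioi 0, g w :=
    setIntegral_nonneg measurableSet_Ioi fun w (hw : 0 < w) => by positivity
  refine ⟨(∫ w in Ioi 0, g w) + 1, by linarith, fun t ρ' ht hρ' => ?_⟩
  calc _ ≤ ∫ w in Ioi 0, g w * (1 + t / ρ') ^ (-N) := by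
        refine integral_mono_of_nonneg ?_ (hg.mul_const _) ?_
        · filter_upwards [ae_restrict_mem measurableSet_Ioi] with w (hw : 0 < w)
          positivity
        · filter_upwards [ae_restrict_mem measurableSet_Ioi] with w (hw : 0 < w)
          rw [mul_comm w, ← div_div]
          exact exp_mul_rpow_mul_one_add_div_rpow_neg_div_le (by positivity) hN.le hw
    _ = (∫ w in Ioi 0, g w) * (1 + t / ρ') ^ (-N) := integral_mul_const _ _
    _ ≤ _ := by gcongr; linarith
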